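/- arXiv:1612.00765 — 2 statements merged into one kernel-verified Lean document; each statement's English description precedes it below -/
import Mathlib

section
/- Let p be prime, k even, ε ∈ {±1}, and let A be a commutative ring. Let λ ∈ A and define a sequence (a_n) in A by a_0 = 1, a_1 = λ, and the Hecke recurrence a_n = λ·a_{n−1} − p^{k−1}·a_{n−2} for n ≥ 2. Then for all n ≥ 1, a_n + ε p^{k/2} a_{n−1} ≡ (−ε p^{k/2−1})^n modulo the ideal of A generated by λ + ε p^{k/2−1}(p+1). Consequently, if f is a newform of level divisible exactly once by p with Atkin–Lehner eigenvalue ε at p (so that its p^n-th Hecke eigenvalue is (−ε p^{k/2−1})^n) and g is a newform of level prime to p with p-th Hecke eigenvalue λ_p, then the p^n-th Fourier coefficients of f and of g_p^{(ε)}(z) = g(z) + ε p^{k/2}g(pz) are congruent modulo any ideal containing λ_p + ε p^{k/2−1}(p+1). -/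
/-!
Modulo `c = λ + ε p^(k/2-1) (p+1)` and using `ε² = 1`, the Hecke polynomial `X² - λX + p^(k-1)`
factors as `(X - α)(X - β)` with `α = -ε p^(k/2-1)` and `β = -ε p^(k/2) = p α`. For any sequence
with `a 0 = 1`, `a 1 = α + β` and characteristic roots `α, β`, the twisted sequence
`a (n+1) - β a n` is geometric with ratio `α`, hence equals `α^(n+1)`.
-/

theorem succ_sub_mul_eq_pow_of_rec {R : Type*} [CommRing R] (α β : R) (a : ℕ → R)
    (h0 : a 0 = 1) (h1 : a 1 = α + β)
    (hrec : ∀ n, a (n + 2) = (α + β) * a (n + 1) - α * β * a n) (n : ℕ) :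
    a (n + 1) - β * a n = α ^ (n + 1) := by
  induction n with
  | zero => rw [h0, h1]; ring
  | succ n ih => rw [hrec, pow_succ, ← ih]; ring

theorem hecke_seq_sub_pow_mem_span {R : Type*} [CommRing R] (lam ε p q : R) (hε : ε * ε = 1)
    (a : ℕ → R) (h0 : a 0 = 1) (h1 : a 1 = lam)
    (hrec : ∀ n, a (n + 2) = lam * a (n + 1) - p * q ^ 2 * a n) (n : ℕ) :
    a (n + 1) + ε * (p * q) * a n - (-ε * q) ^ (n + 1) ∈
      Ideal.span {lam + ε * q * (p + 1)} := by
  set π := Ideal.Quotient.mk (Ideal.span {lam + ε * q * (p + 1)})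
  have hlam : π lam = π (-ε * q) + π (-ε * (p * q)) := by
    rw [← map_add, Ideal.Quotient.eq, Ideal.mem_span_singleton]
    exact ⟨1, by ring⟩
  have hpq : π (p * q ^ 2) = π (-ε * q) * π (-ε * (p * q)) := by
    rw [← map_mul]
    congr 1
    linear_combination (-(p * q ^ 2)) * hε
  have hgeom := succ_sub_mul_eq_pow_of_rec (π (-ε * q)) (π (-ε * (p * q))) (π ∘ a)
    (by simp [h0]) (by simp [h1, hlam]) (fun n => by simp [hrec, hlam, hpq]) n
  rw [← Ideal.Quotient.eq_zero_iff_mem]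
  simp only [Function.comp_apply, map_sub, map_add, map_mul, map_neg, map_pow] at hgeom ⊢
  linear_combination hgeom

theorem hecke_recurrence_congruence_general {A : Type*} [CommRing A]
    (p k : ℕ) (hk : Even k) (hk2 : 2 ≤ k)
    (ε : A) (hε : ε = 1 ∨ ε = -1) (lam : A) (a : ℕ → A)
    (ha0 : a 0 = 1) (ha1 : a 1 = lam)
    (hrec : ∀ n, 2 ≤ n → a n = lam * a (n - 1) - (p : A) ^ (k - 1) * a (n - 2)) :
    (∀ n, 1 ≤ n →
      a n + ε * (p : A) ^ (k / 2) * a (n - 1) - (-ε * (p : A) ^ (k / 2 - 1)) ^ n ∈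
        Ideal.span {lam + ε * (p : A) ^ (k / 2 - 1) * ((p : A) + 1)}) ∧
    (∀ J : Ideal A, lam + ε * (p : A) ^ (k / 2 - 1) * ((p : A) + 1) ∈ J →
      ∀ n, 1 ≤ n →
        (-ε * (p : A) ^ (k / 2 - 1)) ^ n -
          (a n + ε * (p : A) ^ (k / 2) * a (n - 1)) ∈ J) := by
  have hε2 : ε * ε = 1 := by rcases hε with rfl | rfl <;> norm_num
  have hhalf : (p : A) ^ (k / 2) = p * p ^ (k / 2 - 1) := by
    rw [← pow_succ']; congr 1; omega
  have hodd : (p : A) ^ (k - 1) = p * (p ^ (k / 2 - 1)) ^ 2 := by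
    obtain ⟨r, rfl⟩ := hk
    rw [← pow_mul, ← pow_succ']; congr 1; omega
  have hmem : ∀ n, 1 ≤ n →
      a n + ε * (p : A) ^ (k / 2) * a (n - 1) - (-ε * (p : A) ^ (k / 2 - 1)) ^ n ∈
        Ideal.span {lam + ε * (p : A) ^ (k / 2 - 1) * ((p : A) + 1)} := by
    intro n hn
    obtain ⟨n, rfl⟩ := Nat.exists_eq_add_of_le' hn
    rw [hhalf, Nat.add_sub_cancel]
    refine hecke_seq_sub_pow_mem_span lam ε p _ hε2 a ha0 ha1 (fun n => ?_) n
    simpa [hodd] using hrec (n + 2) (by omega)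
  refine ⟨hmem, fun J hJ n hn => ?_⟩
  rw [← neg_sub]
  exact J.neg_mem (Ideal.span_singleton_le_iff_mem J |>.2 hJ (hmem n hn))

/-- **Hecke recurrence congruence.**
Let `p` be prime, `k` even (a modular weight, so `k ≥ 2`), `ε ∈ {±1}`, and let `A` be a
commutative ring.  Let `λ ∈ A` and define a sequence `(a n)` in `A` by `a 0 = 1`,
`a 1 = λ` and the Hecke recurrence `a n = λ·a (n-1) - p^(k-1)·a (n-2)` for `n ≥ 2`.
Then for all `n ≥ 1`,
`a n + ε p^(k/2) a (n-1) ≡ (-ε p^(k/2-1))^n` modulo the ideal of `A` generated by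
`λ + ε p^(k/2-1) (p+1)`.
Consequently (taking `a n = λ_{pⁿ}` to be the `pⁿ`-th Hecke eigenvalue of a newform `g` of
level prime to `p`, so that `a n + ε p^(k/2) a (n-1)` is the `pⁿ`-th Fourier coefficient of
`g_p^{(ε)}(z) = g(z) + ε p^(k/2) g(pz)`, while `(-ε p^(k/2-1))^n` is the `pⁿ`-th Fourier
coefficient of a newform whose level is exactly divisible by `p` with Atkin–Lehner
eigenvalue `ε` at `p`): the `pⁿ`-th Fourier coefficients of the two forms are congruent
modulo any ideal `J` containing `λ + ε p^(k/2-1) (p+1)`. -/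
theorem hecke_recurrence_congruence {A : Type*} [CommRing A]
    (p k : ℕ) (hp : p.Prime) (hk : Even k) (hk2 : 2 ≤ k)
    (ε : A) (hε : ε = 1 ∨ ε = -1) (lam : A) (a : ℕ → A)
    (ha0 : a 0 = 1) (ha1 : a 1 = lam)
    (hrec : ∀ n, 2 ≤ n → a n = lam * a (n - 1) - (p : A) ^ (k - 1) * a (n - 2)) :
    (∀ n, 1 ≤ n →
      a n + ε * (p : A) ^ (k / 2) * a (n - 1) - (-ε * (p : A) ^ (k / 2 - 1)) ^ n ∈
        Ideal.span {lam + ε * (p : A) ^ (k / 2 - 1) * ((p : A) + 1)}) ∧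
    (∀ J : Ideal A, lam + ε * (p : A) ^ (k / 2 - 1) * ((p : A) + 1) ∈ J →
      ∀ n, 1 ≤ n →
        (-ε * (p : A) ^ (k / 2 - 1)) ^ n -
          (a n + ε * (p : A) ^ (k / 2) * a (n - 1)) ∈ J) :=
  hecke_recurrence_congruence_general p k hk hk2 ε hε lam a ha0 ha1 hrec
end

section
/- Let N ≥ 1, w ≥ 2 even, and let P₀ = 𝟏|(1−S) ∈ W_w(N), where 𝟏 ∈ V_w(N) is the tuple whose every component is the constant polynomial 1. Then for every T̃_N ∈ R_N satisfying T_N^∞(1−S) − (1−S)T̃_N ∈ (1−T)R_N, and for every coset A = Γ₀(N)[[*,*],[z,t]] ∈ Γ₀(N)\Γ₁, one has P₀|_Θ T̃_N(A) = N_z^w − N_t^w X^w, where N_a := N/gcd(N,a). -/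
open Matrix MatrixGroups CongruenceSubgroup Polynomial

noncomputable section

namespace PP

abbrev SL2Z := Matrix.SpecialLinearGroup (Fin 2) ℤ
abbrev Mat2 := Matrix (Fin 2) (Fin 2) ℤ

def Sm : SL2Z := ⟨!![0,-1;1,0], by norm_num [Matrix.det_fin_two_of]⟩
def Um : SL2Z := ⟨!![1,-1;1,0], by norm_num [Matrix.det_fin_two_of]⟩
def Tm : SL2Z := ⟨!![1,1;0,1], by norm_num [Matrix.det_fin_two_of]⟩

/-- The coset space `Γ₀(N)\SL₂(ℤ)`. -/
def Coset (N : ℕ) := Quotient (QuotientGroup.rightRel (Gamma0 N))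

def mkCoset (N : ℕ) (g : SL2Z) : Coset N := Quotient.mk (QuotientGroup.rightRel (Gamma0 N)) g

/-- Right multiplication of a right coset by a group element. -/
def cosetMul {N : ℕ} (A : Coset N) (γ : SL2Z) : Coset N :=
  Quotient.map (· * γ) (by
    intro a b h
    exact QuotientGroup.rightRel_apply.mpr
      (by simpa [mul_assoc] using QuotientGroup.rightRel_apply.mp h)) A

/-- The weight `-w` action of an integral matrix on polynomials:
`P ↦ P((aX+b)/(cX+d))·(cX+d)^w`, for polynomials of degree at most `w`. -/
def polySlash {R : Type*} [CommRing R] (w : ℕ) (g : Mat2) (P : Polynomial R) : Polynomial R :=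
  ∑ i ∈ Finset.range (w+1), Polynomial.C (P.coeff i) *
    (Polynomial.C (g 0 0 : R) * Polynomial.X + Polynomial.C (g 0 1 : R))^i *
    (Polynomial.C (g 1 0 : R) * Polynomial.X + Polynomial.C (g 1 1 : R))^(w-i)

/-- The action `P|γ(A) = P(Aγ⁻¹)|_{-w}γ` on tuples of polynomials indexed by cosets. -/
def actV {R : Type*} [CommRing R] {N : ℕ} (w : ℕ) (γ : SL2Z) (P : Coset N → Polynomial R) :
    Coset N → Polynomial R :=
  fun A => polySlash w (γ : Mat2) (P (cosetMul A γ⁻¹))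

/-- The space `W_w(N)_{/R}` of period polynomials of degree `w` for `Γ₀(N)` over `R`. -/
def WSet (R : Type*) [CommRing R] (w N : ℕ) : Set (Coset N → Polynomial R) :=
  {P | (∀ A, (P A).degree ≤ w) ∧ (P + actV w Sm P = 0) ∧
    (P + actV w Um P + actV w (Um * Um) P = 0)}

/-- The trace map `tr^N_M : V_w(N) → V_w(M)`, `tr(P)(C) = ∑_B P(B·C)` over
cosets `B ∈ Γ₀(N)\Γ₀(M)`. -/
def trMap (R : Type*) [CommRing R] (N M : ℕ) (P : Coset N → Polynomial R) :
    Coset M → Polynomial R :=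
  fun C => ∑ᶠ B : Quotient (QuotientGroup.rightRel ((Gamma0 N).subgroupOf (Gamma0 M))),
    P (mkCoset N ((Quotient.out B : Gamma0 M) * Quotient.out C))

/-- The double coset `Θ_N = Γ₀(N)·w_N`: integral matrices of determinant `N`
whose entries `a, c, d` are all divisible by `N`. -/
def ThetaSet (N : ℕ) : Set Mat2 :=
  {m | m.det = (N : ℤ) ∧ (N:ℤ) ∣ m 0 0 ∧ (N:ℤ) ∣ m 1 0 ∧ (N:ℤ) ∣ m 1 1}

/-- The action `P|_Σ m` of a single matrix `m` of determinant `n`, relative to a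
double coset (or union of cosets) `Σ ⊆ M_n`:  `P|_Σ m (A) = P(A_m)|_{-w} m` if
`m·A⁻¹ = A_m⁻¹·m_A` with `A_m ∈ Γ₁`, `m_A ∈ Σ`, and `0` otherwise. -/
def sigmaAct {R : Type*} [CommRing R] (N : ℕ) (w : ℕ) (Sig : Set Mat2) (m : Mat2)
    (P : Coset N → Polynomial R) (A : Coset N) : Polynomial R :=
  @dite _ (∃ q : SL2Z × SL2Z, mkCoset N q.2 = A ∧
      ((q.1 : Mat2) * m * ((q.2⁻¹ : SL2Z) : Mat2)) ∈ Sig) (Classical.dec _)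
    (fun h => polySlash w m (P (mkCoset N h.choose.1)))
    (fun _ => 0)

/-- Linear extension of `sigmaAct` to elements of `R_n = ℤ[M_n]`. -/
def sigmaActR {R : Type*} [CommRing R] (N : ℕ) (w : ℕ) (Sig : Set Mat2)
    (T : MonoidAlgebra ℤ Mat2) (P : Coset N → Polynomial R) : Coset N → Polynomial R :=
  fun A => T.coeff.sum (fun m c => c • sigmaAct N w Sig m P A)

/-- The Atkin–Lehner action `P|_Θ m`. -/
def thetaAct {R : Type*} [CommRing R] (N : ℕ) (w : ℕ) (m : Mat2)
    (P : Coset N → Polynomial R) (A : Coset N) : Polynomial R :=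
  sigmaAct N w (ThetaSet N) m P A

/-- `P|_Θ T̃` for `T̃ ∈ ℤ[M_N]`. -/
def thetaActR {R : Type*} [CommRing R] (N : ℕ) (w : ℕ) (T : MonoidAlgebra ℤ Mat2)
    (P : Coset N → Polynomial R) : Coset N → Polynomial R :=
  sigmaActR N w (ThetaSet N) T P

/-- Membership in `R_n ⊂ ℤ[M_2(ℤ)]`: supported on matrices of determinant `n`. -/
def memRn (n : ℕ) (T : MonoidAlgebra ℤ Mat2) : Prop :=
  ∀ m ∈ T.coeff.support, m.det = (n : ℤ)

/-- `x` lies in `(1 - T)·R_n`. -/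
def memOneSubTRn (n : ℕ) (x : MonoidAlgebra ℤ Mat2) : Prop :=
  ∃ Y : MonoidAlgebra ℤ Mat2, memRn n Y ∧
    x = (MonoidAlgebra.single (1 : Mat2) (1:ℤ) - MonoidAlgebra.single (Tm : Mat2) (1:ℤ)) * Y

/-- `Srep` is a system of representatives, fixing `∞`, for `Γ₁\M_n`. -/
def IsInfRepSystem (n : ℕ) (Srep : Finset Mat2) : Prop :=
  (∀ m ∈ Srep, m.det = (n:ℤ) ∧ m 1 0 = 0) ∧
    ∀ m : Mat2, m.det = (n:ℤ) → ∃! s, s ∈ Srep ∧ ∃ γ : SL2Z, m = (γ : Mat2) * s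

/-- `T̃_n` is a valid Hecke element in the sense of Choie–Zagier: for some system of
representatives `Srep` fixing `∞` of `Γ₁\M_n`, with `T_n^∞ = ∑_{m ∈ Srep} m`, one has
`T_n^∞ (1-S) - (1-S) T̃_n ∈ (1-T) R_n`. -/
def IsHeckeElt (n : ℕ) (T : MonoidAlgebra ℤ Mat2) : Prop :=
  memRn n T ∧ ∃ Srep : Finset Mat2, IsInfRepSystem n Srep ∧
    memOneSubTRn n
      ((∑ m ∈ Srep, MonoidAlgebra.single m (1:ℤ)) *
          (MonoidAlgebra.single (1 : Mat2) (1:ℤ) - MonoidAlgebra.single (Sm : Mat2) (1:ℤ)) -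
        (MonoidAlgebra.single (1 : Mat2) (1:ℤ) - MonoidAlgebra.single (Sm : Mat2) (1:ℤ)) * T)

/-- The `p`-new subspace `W_w(N)^{p-new}_{/R}`, relative to a Hecke element `T̃_N`. -/
def pNew (R : Type*) [CommRing R] (w N M : ℕ) (T : MonoidAlgebra ℤ Mat2) :
    Set (Coset N → Polynomial R) :=
  {P | P ∈ WSet R w N ∧ trMap R N M P = 0 ∧ trMap R N M (thetaActR N w T P) = 0}

end PP

/-
For a constant tuple `P`, `P|_Θ m (Γ₀(N) g)` is `P|_{-w} m` when `m ∈ Γ₁ w_N g` and `0`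
otherwise. As `P₀` is the constant tuple `1 - X^w`, this gives `P₀|_Θ m (A) = e(m) - e(S m)` with
`e(m) = 𝟏|_Θ m (A)`, so `P₀|_Θ T̃_N (A)` is the linear extension of `e` evaluated at `(1-S) T̃_N`.
Now `e(m)` only depends on the bottom row of `m`, so `e` is `T`-invariant and kills `(1-T) R_N`:
we may replace `(1-S) T̃_N` by `T_N^∞ (1-S)`. In each of the two resulting sums over `M_N^∞` a
single representative lies in the relevant coset (`Γ₁ w_N g`, resp. `Γ₁ w_N g S⁻¹`). It is upper
triangular of determinant `N`, and its first column has the same gcd as that of `w_N g`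
(resp. `w_N g S⁻¹`), namely `gcd(N, z)` (resp. `gcd(N, t)`); hence its lower right entry is
`±N_z` (resp. `±N_t`), and `w` is even.
-/

namespace PP

open Polynomial

section polySlash

variable {R : Type*} [CommRing R] (w : ℕ) (m : Mat2)

lemma polySlash_one :
    polySlash w m (1 : R[X]) = (C (m 1 0 : R) * X + C (m 1 1 : R)) ^ w := by
  rw [polySlash, Finset.sum_eq_single 0]
  · simp
  · intro i _ hi; simp [coeff_one, hi]
  · simp

lemma polySlash_X_pow :
    polySlash w m (X ^ w : R[X]) = (C (m 0 0 : R) * X + C (m 0 1 : R)) ^ w := by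
  rw [polySlash, Finset.sum_eq_single w]
  · simp
  · intro i _ hi; simp [coeff_X_pow, hi]
  · simp

lemma polySlash_sub (P Q : R[X]) :
    polySlash w m (P - Q) = polySlash w m P - polySlash w m Q := by
  simp only [polySlash, coeff_sub, map_sub, sub_mul, Finset.sum_sub_distrib]

end polySlash

section SL2Z

variable (γ : SL2Z) (x : Mat2)

lemma coe_inv_mul_self : ((γ⁻¹ : SL2Z) : Mat2) * (γ : Mat2) = 1 := by
  rw [← Matrix.SpecialLinearGroup.coe_mul, inv_mul_cancel, Matrix.SpecialLinearGroup.coe_one]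

lemma coe_mul_inv_self : (γ : Mat2) * ((γ⁻¹ : SL2Z) : Mat2) = 1 := by
  rw [← Matrix.SpecialLinearGroup.coe_mul, mul_inv_cancel, Matrix.SpecialLinearGroup.coe_one]

lemma coe_inv_mul_cancel_left : ((γ⁻¹ : SL2Z) : Mat2) * ((γ : Mat2) * x) = x := by
  rw [← mul_assoc, coe_inv_mul_self, one_mul]

lemma coe_mul_inv_cancel_right : x * (γ : Mat2) * ((γ⁻¹ : SL2Z) : Mat2) = x := by
  rw [mul_assoc, coe_mul_inv_self, mul_one]

end SL2Z

def gamma1Coset (W : Mat2) : Set Mat2 := {m | ∃ γ : SL2Z, m = (γ : Mat2) * W}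

lemma coe_mul_mem_gamma1Coset_iff {W m : Mat2} (γ : SL2Z) :
    (γ : Mat2) * m ∈ gamma1Coset W ↔ m ∈ gamma1Coset W := by
  constructor
  · rintro ⟨δ, hδ⟩
    exact ⟨γ⁻¹ * δ, by
      rw [Matrix.SpecialLinearGroup.coe_mul, mul_assoc, ← hδ, coe_inv_mul_cancel_left]⟩
  · rintro ⟨δ, rfl⟩
    exact ⟨γ * δ, by rw [Matrix.SpecialLinearGroup.coe_mul, mul_assoc]⟩

lemma mul_coe_mem_gamma1Coset_mul_iff {W m : Mat2} (γ : SL2Z) :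
    m * (γ : Mat2) ∈ gamma1Coset (W * γ) ↔ m ∈ gamma1Coset W := by
  constructor
  · rintro ⟨δ, hδ⟩
    refine ⟨δ, ?_⟩
    rw [← coe_mul_inv_cancel_right γ m, hδ, ← mul_assoc, coe_mul_inv_cancel_right]
  · rintro ⟨δ, rfl⟩
    exact ⟨δ, mul_assoc _ _ _⟩

def wN (N : ℕ) : Mat2 := !![0, -1; (N : ℤ), 0]

lemma wN_mem_ThetaSet (N : ℕ) : wN N ∈ ThetaSet N :=
  ⟨by simp [wN, det_fin_two_of], by simp [wN], by simp [wN], by simp [wN]⟩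

lemma ThetaSet.mul_mem {N : ℕ} {θ : Mat2} (hθ : θ ∈ ThetaSet N) {δ : SL2Z}
    (hδ : δ ∈ Gamma0 N) : θ * (δ : Mat2) ∈ ThetaSet N := by
  obtain ⟨hdet, ha, hc, hd⟩ := hθ
  have hδc : (N : ℤ) ∣ (δ : Mat2) 1 0 :=
    (ZMod.intCast_zmod_eq_zero_iff_dvd _ N).mp (Gamma0_mem.mp hδ)
  refine ⟨by rw [det_mul, hdet, δ.prop, mul_one], ?_, ?_, ?_⟩ <;>
    simp only [mul_apply, Fin.sum_univ_two]
  · exact dvd_add (dvd_mul_of_dvd_left ha _) (dvd_mul_of_dvd_right hδc _)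
  · exact dvd_add (dvd_mul_of_dvd_left hc _) (dvd_mul_of_dvd_right hδc _)
  · exact dvd_add (dvd_mul_of_dvd_left hc _) (dvd_mul_of_dvd_left hd _)

lemma ThetaSet.mem_gamma1Coset_wN {N : ℕ} (hN : N ≠ 0) {θ : Mat2} (hθ : θ ∈ ThetaSet N) :
    θ ∈ gamma1Coset (wN N) := by
  obtain ⟨hdet, ⟨a, ha⟩, ⟨c, hc⟩, -⟩ := hθ
  rw [det_fin_two, ha, hc] at hdet
  have hγ : -θ 0 1 * c - a * -θ 1 1 = 1 := by
    refine mul_left_cancel₀ (c := 1) (Int.natCast_ne_zero.mpr hN) ?_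
    linear_combination hdet
  refine ⟨⟨!![-θ 0 1, a; -θ 1 1, c], by rw [det_fin_two_of]; exact hγ⟩, ?_⟩
  ext i j
  fin_cases i <;> fin_cases j <;> simp [wN, mul_apply, ha, hc] <;> ring

lemma exists_mul_mem_ThetaSet_iff {N : ℕ} (hN : N ≠ 0) (m : Mat2) (g : SL2Z) :
    (∃ q : SL2Z × SL2Z, mkCoset N q.2 = mkCoset N g ∧
      (q.1 : Mat2) * m * ((q.2⁻¹ : SL2Z) : Mat2) ∈ ThetaSet N) ↔
    m ∈ gamma1Coset (wN N * g) := by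
  constructor
  · rintro ⟨⟨q₁, q₂⟩, hq, hθ⟩
    have hδ : q₂ * g⁻¹ ∈ Gamma0 N := QuotientGroup.rightRel_apply.mp (Quotient.exact hq.symm)
    obtain ⟨γ, hγ⟩ := ThetaSet.mem_gamma1Coset_wN hN (ThetaSet.mul_mem hθ hδ)
    refine ⟨q₁⁻¹ * γ, ?_⟩
    rw [Matrix.SpecialLinearGroup.coe_mul, mul_assoc, ← mul_assoc _ _ (g : Mat2), ← hγ]
    simp only [Matrix.SpecialLinearGroup.coe_mul, mul_assoc, coe_inv_mul_cancel_left,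
      coe_inv_mul_self, mul_one]
  · rintro ⟨γ, rfl⟩
    exact ⟨(γ⁻¹, g), rfl, by
      simpa only [mul_assoc, coe_inv_mul_cancel_left, coe_mul_inv_self, mul_one] using
        wN_mem_ThetaSet N⟩

section linearExt

variable {G M : Type*} [AddCommGroup M]

def linearExt (e : G → M) : MonoidAlgebra ℤ G →+ M :=
  (Finsupp.linearCombination ℤ e).toAddMonoidHom.comp MonoidAlgebra.coeffAddEquiv.toAddMonoidHom

lemma linearExt_single (e : G → M) (a : G) (c : ℤ) :
    linearExt e (MonoidAlgebra.single a c) = c • e a :=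
  Finsupp.linearCombination_single ℤ c a

lemma linearExt_sub_fun (e₁ e₂ : G → M) (x : MonoidAlgebra ℤ G) :
    linearExt (fun g => e₁ g - e₂ g) x = linearExt e₁ x - linearExt e₂ x := by
  induction x using MonoidAlgebra.induction_linear with
  | zero => simp only [map_zero, sub_zero]
  | add x y hx hy => rw [map_add, map_add, map_add, hx, hy]; abel
  | single a c => rw [linearExt_single, linearExt_single, linearExt_single, smul_sub]

lemma linearExt_sum_single (e : G → M) (F : Finset G) :
    linearExt e (∑ g ∈ F, MonoidAlgebra.single g 1) = ∑ g ∈ F, e g := by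
  simp only [map_sum, linearExt_single, one_smul]

variable [Monoid G]

lemma linearExt_single_one_mul (e : G → M) (a : G) (x : MonoidAlgebra ℤ G) :
    linearExt e (MonoidAlgebra.single a 1 * x) = linearExt (fun g => e (a * g)) x := by
  induction x using MonoidAlgebra.induction_linear with
  | zero => rw [mul_zero, map_zero, map_zero]
  | add x y hx hy => rw [mul_add, map_add, map_add, hx, hy]
  | single b c => rw [MonoidAlgebra.single_mul_single, one_mul, linearExt_single, linearExt_single]

lemma linearExt_mul_single_one (e : G → M) (a : G) (x : MonoidAlgebra ℤ G) :
    linearExt e (x * MonoidAlgebra.single a 1) = linearExt (fun g => e (g * a)) x := by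
  induction x using MonoidAlgebra.induction_linear with
  | zero => rw [zero_mul, map_zero, map_zero]
  | add x y hx hy => rw [add_mul, map_add, map_add, hx, hy]
  | single b c => rw [MonoidAlgebra.single_mul_single, mul_one, linearExt_single, linearExt_single]

lemma linearExt_one_sub_single_mul (e : G → M) (a : G) (x : MonoidAlgebra ℤ G) :
    linearExt e ((MonoidAlgebra.single 1 1 - MonoidAlgebra.single a 1) * x) =
      linearExt (fun g => e g - e (a * g)) x := by
  rw [sub_mul, map_sub, linearExt_single_one_mul, linearExt_single_one_mul, linearExt_sub_fun]
  simp only [one_mul]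

lemma linearExt_one_sub_single_mul_eq_zero {e : G → M} {a : G} (he : ∀ g, e (a * g) = e g)
    (x : MonoidAlgebra ℤ G) :
    linearExt e ((MonoidAlgebra.single 1 1 - MonoidAlgebra.single a 1) * x) = 0 := by
  rw [linearExt_one_sub_single_mul, linearExt_sub_fun]
  simp only [he, sub_self]

end linearExt

lemma thetaActR_eq_linearExt {R : Type*} [CommRing R] (N w : ℕ) (T : MonoidAlgebra ℤ Mat2)
    (P : Coset N → R[X]) (A : Coset N) :
    thetaActR N w T P A = linearExt (fun m => thetaAct N w m P A) T :=
  rfl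

lemma IsInfRepSystem.exists_mem_gamma1Coset {n : ℕ} {Srep : Finset Mat2}
    (hS : IsInfRepSystem n Srep) {W : Mat2} (hW : W.det = n) :
    ∃ s ∈ Srep, s ∈ gamma1Coset W := by
  obtain ⟨s, ⟨hs, γ, hγ⟩, -⟩ := hS.2 W hW
  exact ⟨s, hs, γ⁻¹, by rw [hγ, coe_inv_mul_cancel_left]⟩

lemma IsInfRepSystem.sum_eq_single {M : Type*} [AddCommMonoid M] {n : ℕ} {Srep : Finset Mat2}
    (hS : IsInfRepSystem n Srep) {W s₀ : Mat2} (hs₀ : s₀ ∈ Srep) (hs₀W : s₀ ∈ gamma1Coset W)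
    (f : Mat2 → M) (hf : ∀ m ∉ gamma1Coset W, f m = 0) :
    ∑ s ∈ Srep, f s = f s₀ := by
  refine Finset.sum_eq_single_of_mem s₀ hs₀ fun s hs hne => hf s fun hsW => hne ?_
  obtain ⟨γ₀, hγ₀⟩ := hs₀W
  obtain ⟨γ, hγ⟩ := hsW
  refine (hS.2 s₀ (hS.1 s₀ hs₀).1).unique ⟨hs, γ₀ * γ⁻¹, ?_⟩
    ⟨hs₀, 1, by rw [Matrix.SpecialLinearGroup.coe_one, one_mul]⟩
  rw [Matrix.SpecialLinearGroup.coe_mul, mul_assoc, hγ, coe_inv_mul_cancel_left, hγ₀]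

lemma gcd_col_dvd_gcd_col_mul (A M : Mat2) :
    Int.gcd (M 0 0) (M 1 0) ∣ Int.gcd ((A * M) 0 0) ((A * M) 1 0) := by
  have h : ∀ i, ((Int.gcd (M 0 0) (M 1 0) : ℕ) : ℤ) ∣ (A * M) i 0 := fun i => by
    rw [mul_apply, Fin.sum_univ_two]
    exact dvd_add (dvd_mul_of_dvd_right (Int.gcd_dvd_left ..) _)
      (dvd_mul_of_dvd_right (Int.gcd_dvd_right ..) _)
  exact Int.dvd_gcd (h 0) (h 1)

lemma gcd_col_coe_mul (γ : SL2Z) (M : Mat2) :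
    Int.gcd (((γ : Mat2) * M) 0 0) (((γ : Mat2) * M) 1 0) = Int.gcd (M 0 0) (M 1 0) := by
  refine Nat.dvd_antisymm ?_ (gcd_col_dvd_gcd_col_mul _ _)
  simpa only [coe_inv_mul_cancel_left] using
    gcd_col_dvd_gcd_col_mul ((γ⁻¹ : SL2Z) : Mat2) ((γ : Mat2) * M)

lemma det_wN_mul (N : ℕ) (g : SL2Z) : (wN N * (g : Mat2)).det = N := by
  rw [det_mul, g.prop, mul_one, wN, det_fin_two_of]
  ring

lemma gcd_col_wN_mul (N : ℕ) (g : SL2Z) :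
    Int.gcd ((wN N * (g : Mat2)) 0 0) ((wN N * (g : Mat2)) 1 0) = Int.gcd N ((g : Mat2) 1 0) := by
  have hcop : Nat.Coprime ((g : Mat2) 0 0).natAbs ((g : Mat2) 1 0).natAbs :=
    Int.isCoprime_iff_gcd_eq_one.mp (Matrix.SpecialLinearGroup.isCoprime_col g 0)
  simp only [wN, mul_apply, Fin.sum_univ_two, of_apply, cons_val', cons_val_zero, cons_val_one,
    empty_val', cons_val_fin_one, zero_mul, zero_add, add_zero, neg_one_mul, Int.neg_gcd]
  rw [Int.gcd, Int.gcd, Int.natAbs_mul, Nat.Coprime.gcd_mul_right_cancel_right _ hcop,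
    Nat.gcd_comm]

lemma natAbs_lowerRight_eq {N : ℕ} (hN : N ≠ 0) {s : Mat2} (hs : s 1 0 = 0)
    (hdet : s.det = N) {g : SL2Z} (h : s ∈ gamma1Coset (wN N * g)) :
    (s 1 1).natAbs = N / Int.gcd N ((g : Mat2) 1 0) := by
  obtain ⟨γ, hγ⟩ := h
  have h00 : (s 0 0).natAbs = Int.gcd N ((g : Mat2) 1 0) := by
    rw [← gcd_col_wN_mul, ← gcd_col_coe_mul γ, ← hγ, hs, Int.gcd_zero_right]
  have hprod : (s 0 0).natAbs * (s 1 1).natAbs = N := by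
    rw [det_fin_two, hs, mul_zero, sub_zero] at hdet
    rw [← Int.natAbs_mul, hdet, Int.natAbs_natCast]
  have hpos : 0 < (s 0 0).natAbs := Nat.pos_of_ne_zero fun h0 => hN (by rw [← hprod, h0, zero_mul])
  rw [← h00, ← hprod, Nat.mul_div_cancel_left _ hpos]

lemma lowerRight_pow_eq {R : Type*} [CommRing R] {N : ℕ} (hN : N ≠ 0) {w : ℕ} (hw : Even w)
    {s : Mat2} (hs : s 1 0 = 0) (hdet : s.det = N) {g : SL2Z} (h : s ∈ gamma1Coset (wN N * g)) :
    (s 1 1 : R) ^ w = ((N / Int.gcd N ((g : Mat2) 1 0) : ℕ) : R) ^ w := by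
  rw [← natAbs_lowerRight_eq hN hs hdet h, Nat.cast_natAbs, ← Int.cast_pow, ← Int.cast_pow,
    hw.pow_abs]

section thetaActOne

variable {R : Type*} [CommRing R] {N : ℕ} {w : ℕ} {g : SL2Z} {m : Mat2}

lemma thetaAct_const_of_mem (hN : N ≠ 0) (p : R[X]) (h : m ∈ gamma1Coset (wN N * g)) :
    thetaAct N w m (fun _ => p) (mkCoset N g) = polySlash w m p :=
  dif_pos ((exists_mul_mem_ThetaSet_iff hN m g).mpr h)

lemma thetaAct_const_of_not_mem (hN : N ≠ 0) (p : R[X]) (h : m ∉ gamma1Coset (wN N * g)) :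
    thetaAct N w m (fun _ => p) (mkCoset N g) = 0 :=
  dif_neg (mt (exists_mul_mem_ThetaSet_iff hN m g).mp h)

variable (R N w g)

def thetaActOne (m : Mat2) : R[X] := thetaAct N w m (fun _ => 1) (mkCoset N g)

variable {R N w g}

lemma thetaActOne_of_mem (hN : N ≠ 0) (h : m ∈ gamma1Coset (wN N * g)) :
    thetaActOne R N w g m = (C (m 1 0 : R) * X + C (m 1 1 : R)) ^ w :=
  (thetaAct_const_of_mem hN 1 h).trans (polySlash_one w m)

lemma thetaActOne_of_not_mem (hN : N ≠ 0) (h : m ∉ gamma1Coset (wN N * g)) :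
    thetaActOne R N w g m = 0 :=
  thetaAct_const_of_not_mem hN 1 h

lemma thetaActOne_Tm_mul (hN : N ≠ 0) (m : Mat2) :
    thetaActOne R N w g ((Tm : Mat2) * m) = thetaActOne R N w g m := by
  by_cases h : m ∈ gamma1Coset (wN N * g)
  · rw [thetaActOne_of_mem hN h, thetaActOne_of_mem hN ((coe_mul_mem_gamma1Coset_iff Tm).mpr h)]
    simp [Tm, mul_apply, Fin.sum_univ_two]
  · rw [thetaActOne_of_not_mem hN h,
      thetaActOne_of_not_mem hN (mt (coe_mul_mem_gamma1Coset_iff Tm).mp h)]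

lemma thetaAct_one_sub_X_pow (hN : N ≠ 0) (m : Mat2) :
    thetaAct N w m (fun _ => (1 - X ^ w : R[X])) (mkCoset N g) =
      thetaActOne R N w g m - thetaActOne R N w g ((Sm : Mat2) * m) := by
  by_cases h : m ∈ gamma1Coset (wN N * g)
  · rw [thetaAct_const_of_mem hN _ h, polySlash_sub, polySlash_one, polySlash_X_pow,
      thetaActOne_of_mem hN h, thetaActOne_of_mem hN ((coe_mul_mem_gamma1Coset_iff Sm).mpr h)]
    simp [Sm, mul_apply, Fin.sum_univ_two]
  · rw [thetaAct_const_of_not_mem hN _ h, thetaActOne_of_not_mem hN h,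
      thetaActOne_of_not_mem hN (mt (coe_mul_mem_gamma1Coset_iff Sm).mp h), sub_zero]

end thetaActOne

lemma one_sub_actV_Sm_one (R : Type*) [CommRing R] (N w : ℕ) :
    (fun _ => 1) - actV w Sm (fun _ => (1 : R[X])) = fun (_ : Coset N) => 1 - X ^ w := by
  funext A
  simp [actV, polySlash_one, Sm]

lemma linearExt_thetaActOne_infRep_mul_one_sub_Sm {R : Type*} [CommRing R] {N : ℕ} (hN : N ≠ 0)
    {w : ℕ} (hw : Even w) {Srep : Finset Mat2} (hS : IsInfRepSystem N Srep) (g : SL2Z) :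
    linearExt (thetaActOne R N w g) ((∑ m ∈ Srep, MonoidAlgebra.single m (1 : ℤ)) *
        (MonoidAlgebra.single 1 1 - MonoidAlgebra.single (Sm : Mat2) 1)) =
      C (((N / Int.gcd N ((g : Mat2) 1 0) : ℕ) : R) ^ w) -
        C (((N / Int.gcd N ((g : Mat2) 1 1) : ℕ) : R) ^ w) * X ^ w := by
  rw [mul_sub, map_sub, linearExt_mul_single_one, linearExt_mul_single_one, linearExt_sum_single,
    linearExt_sum_single]
  simp only [mul_one]
  congr 1
  · obtain ⟨s, hs, hsW⟩ := hS.exists_mem_gamma1Coset (det_wN_mul N g)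
    obtain ⟨hdet, hs10⟩ := hS.1 s hs
    rw [hS.sum_eq_single hs hsW _ fun m hm => thetaActOne_of_not_mem hN hm,
      thetaActOne_of_mem hN hsW, hs10, ← lowerRight_pow_eq hN hw hs10 hdet hsW]
    simp
  · have hW : wN N * ((g * Sm⁻¹ : SL2Z) : Mat2) * Sm = wN N * g := by
      rw [Matrix.SpecialLinearGroup.coe_mul, mul_assoc, mul_assoc, coe_inv_mul_self, mul_one]
    have hmem : ∀ m, m * (Sm : Mat2) ∈ gamma1Coset (wN N * g) ↔
        m ∈ gamma1Coset (wN N * ((g * Sm⁻¹ : SL2Z) : Mat2)) := fun m => by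
      rw [← hW, mul_coe_mem_gamma1Coset_mul_iff]
    obtain ⟨s, hs, hsW⟩ := hS.exists_mem_gamma1Coset (det_wN_mul N (g * Sm⁻¹))
    obtain ⟨hdet, hs10⟩ := hS.1 s hs
    have hg : ((g * Sm⁻¹ : SL2Z) : Mat2) 1 0 = -(g : Mat2) 1 1 := by
      rw [Matrix.SpecialLinearGroup.coe_mul, Matrix.SpecialLinearGroup.coe_inv]
      simp [Sm, adjugate_fin_two, mul_apply, Fin.sum_univ_two]
    rw [hS.sum_eq_single hs hsW _ fun m hm => thetaActOne_of_not_mem hN (mt (hmem m).mp hm),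
      thetaActOne_of_mem hN ((hmem s).mpr hsW), ← Int.gcd_neg, ← hg,
      ← lowerRight_pow_eq hN hw hs10 hdet hsW]
    simp [Sm, mul_apply, Fin.sum_univ_two, hs10, mul_pow]

end PP

open PP

theorem thetaAct_eisenstein_period_general (N : ℕ) (hN : 1 ≤ N) (w : ℕ)
    (hw : Even w)
    (Srep : Finset Mat2) (hSrep : IsInfRepSystem N Srep)
    (T : MonoidAlgebra ℤ Mat2)
    (hCZ : memOneSubTRn N
      ((∑ m ∈ Srep, MonoidAlgebra.single m (1:ℤ)) *
          (MonoidAlgebra.single (1 : Mat2) (1:ℤ) - MonoidAlgebra.single (Sm : Mat2) (1:ℤ)) -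
        (MonoidAlgebra.single (1 : Mat2) (1:ℤ) - MonoidAlgebra.single (Sm : Mat2) (1:ℤ)) * T))
    (g : SL2Z) :
    thetaActR N w T
      ((fun _ => 1) - actV w Sm (fun _ => (1 : Polynomial ℂ)))
      (mkCoset N g) =
    Polynomial.C (((N / Int.gcd (N : ℤ) ((g : Mat2) 1 0) : ℕ) : ℂ) ^ w) -
      Polynomial.C (((N / Int.gcd (N : ℤ) ((g : Mat2) 1 1) : ℕ) : ℂ) ^ w) *
        Polynomial.X ^ w := by
  have hN0 : N ≠ 0 := Nat.one_le_iff_ne_zero.mp hN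
  obtain ⟨Y, -, hY⟩ := hCZ
  have hT : (MonoidAlgebra.single 1 1 - MonoidAlgebra.single (Sm : Mat2) 1) * T =
      (∑ m ∈ Srep, MonoidAlgebra.single m 1) *
          (MonoidAlgebra.single 1 1 - MonoidAlgebra.single (Sm : Mat2) 1) -
        (MonoidAlgebra.single 1 1 - MonoidAlgebra.single (Tm : Mat2) 1) * Y := by
    rw [← hY, sub_sub_cancel]
  calc thetaActR N w T ((fun _ => 1) - actV w Sm (fun _ => (1 : ℂ[X]))) (mkCoset N g)
      = linearExt (fun m => thetaActOne ℂ N w g m - thetaActOne ℂ N w g ((Sm : Mat2) * m)) T := by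
        simp only [thetaActR_eq_linearExt, one_sub_actV_Sm_one, thetaAct_one_sub_X_pow hN0]
    _ = linearExt (thetaActOne ℂ N w g)
          ((MonoidAlgebra.single 1 1 - MonoidAlgebra.single (Sm : Mat2) 1) * T) :=
        (linearExt_one_sub_single_mul _ _ _).symm
    _ = _ := by
        rw [hT, map_sub, linearExt_thetaActOne_infRep_mul_one_sub_Sm hN0 hw hSrep,
          linearExt_one_sub_single_mul_eq_zero (thetaActOne_Tm_mul hN0), sub_zero]

/-- **Proposition (Atkin–Lehner image of the Eisenstein period polynomial).**
Let `N ≥ 1`, `w ≥ 2` even, and let `P₀ = 𝟏|(1-S) ∈ W_w(N)` where `𝟏` is the tuple whose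
every component is the constant polynomial `1`.  Then for every Hecke element
`T̃_N ∈ R_N` with `T_N^∞(1-S) - (1-S)T̃_N ∈ (1-T)R_N` (where `T_N^∞` is the sum of a
system of representatives fixing `∞` for `Γ₁\M_N`), and every coset
`A = Γ₀(N)[[*,*],[z,t]]`, one has `P₀|_Θ T̃_N(A) = N_z^w - N_t^w X^w`, where
`N_a := N / gcd(N,a)`. -/
theorem thetaAct_eisenstein_period (N : ℕ) (hN : 1 ≤ N) (w : ℕ) (hw2 : 2 ≤ w)
    (hw : Even w)
    (Srep : Finset Mat2) (hSrep : IsInfRepSystem N Srep)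
    (T : MonoidAlgebra ℤ Mat2) (hT : memRn N T)
    (hCZ : memOneSubTRn N
      ((∑ m ∈ Srep, MonoidAlgebra.single m (1:ℤ)) *
          (MonoidAlgebra.single (1 : Mat2) (1:ℤ) - MonoidAlgebra.single (Sm : Mat2) (1:ℤ)) -
        (MonoidAlgebra.single (1 : Mat2) (1:ℤ) - MonoidAlgebra.single (Sm : Mat2) (1:ℤ)) * T))
    (g : SL2Z) :
    thetaActR N w T
      ((fun _ => 1) - actV w Sm (fun _ => (1 : Polynomial ℂ)))
      (mkCoset N g) =
    Polynomial.C (((N / Int.gcd (N : ℤ) ((g : Mat2) 1 0) : ℕ) : ℂ) ^ w) -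
      Polynomial.C (((N / Int.gcd (N : ℤ) ((g : Mat2) 1 1) : ℕ) : ℂ) ^ w) *
        Polynomial.X ^ w :=
  thetaAct_eisenstein_period_general N hN w hw Srep hSrep T hCZ g
end
end
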